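/- For ℓ ∈ ℕ, ℓ ≥ 1, and real x, q, define γ_ℓ(x) := Γ(x)Γ(ℓ+2−x)/(Γ(2−x)Γ(x+ℓ)) and ζ_ℓ(q) := (γ_ℓ(2/q) − 1)/(q − 2). Let α ∈ (−1/2, 1), and assume either (α ∈ [0,1) and 2 < q < ∞) or (α ∈ (−1/2, 0) and 2 < q ≤ 4 − 6/α). Then ζ_ℓ(q) ≤ ℓ(ℓ+1−2α)/(2(1−α)) for all integers ℓ ≥ 1. Equality holds for ℓ = 1; the inequality is strict for all ℓ ≥ 3; and for ℓ = 2 equality holds if and only if α ∈ (−1/2, 0) and q = 4 − 6/α. -/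

import Mathlib

/-!
Put `x = 2/q ∈ (0,1)`. The Gamma recursion gives `γ_{ℓ+1}(x) = γ_ℓ(x) (ℓ+2-x)/(ℓ+x)`, so
`g_ℓ(x) := x (γ_ℓ(x) - 1)/(2(1-x)) = ζ_ℓ(q)` (`zetaCoef'`) obeys `g_1 = 1` and the affine recursion
`g_{ℓ+1} = ((ℓ+2-x) g_ℓ + x)/(ℓ+x)`, whence `g_2 = 3/(1+x)`. The bound
`B_ℓ = ℓ(ℓ+1-2α)/(2(1-α))` (`zetaBound`) is a near fixed point of this recursion: feeding `B_ℓ` into it falls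
short of `B_{ℓ+1}` by `ℓ((ℓ+2-2α)x+α)/((1-α)(ℓ+x))`, and `B_2 - g_2 = ((3-2α)x+α)/((1-α)(1+x))`.
The hypothesis on `q` amounts to `(3-2α)x + α ≥ 0`, so `g_2 ≤ B_2`, with equality iff
`(3-2α)x + α = 0`, and induction makes the inequality strict from `ℓ = 3` on.
-/

noncomputable section

/-- `γ_ℓ(x) = Γ(x)Γ(ℓ+2-x)/(Γ(2-x)Γ(x+ℓ))`. -/
def gamCoef (ℓ : ℕ) (x : ℝ) : ℝ :=
  Real.Gamma x * Real.Gamma (ℓ + 2 - x) / (Real.Gamma (2 - x) * Real.Gamma (x + ℓ))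

/-- `ζ_ℓ(q) = (γ_ℓ(2/q) - 1)/(q - 2)`. -/
def zetaCoef (ℓ : ℕ) (q : ℝ) : ℝ := (gamCoef ℓ (2 / q) - 1) / (q - 2)

section GammaRatio

variable {x : ℝ}

lemma gamCoef_succ (ℓ : ℕ) (hx0 : 0 < x) (hx2 : x < 2) :
    gamCoef (ℓ + 1) x = gamCoef ℓ x * ((ℓ + 2 - x) / (x + ℓ)) := by
  have hℓ : (0 : ℝ) ≤ ℓ := ℓ.cast_nonneg
  have hℓx : (0 : ℝ) < ℓ + 2 - x := by linarith
  have hxℓ : (0 : ℝ) < x + ℓ := by linarith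
  have hΓ₁ := (Real.Gamma_pos_of_pos (show (0 : ℝ) < 2 - x by linarith)).ne'
  have hΓ₂ := (Real.Gamma_pos_of_pos hxℓ).ne'
  rw [gamCoef, gamCoef, Nat.cast_succ, show (ℓ : ℝ) + 1 + 2 - x = ℓ + 2 - x + 1 by ring,
    ← add_assoc, Real.Gamma_add_one hℓx.ne', Real.Gamma_add_one hxℓ.ne']
  field_simp

lemma gamCoef_one (hx0 : 0 < x) (hx2 : x < 2) : gamCoef 1 x = (2 - x) / x := by
  have hΓ₁ := (Real.Gamma_pos_of_pos (show (0 : ℝ) < 2 - x by linarith)).ne'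
  have hΓ₂ := (Real.Gamma_pos_of_pos hx0).ne'
  rw [gamCoef, Nat.cast_one, show (1 : ℝ) + 2 - x = 2 - x + 1 by ring,
    Real.Gamma_add_one (by linarith), Real.Gamma_add_one hx0.ne']
  field_simp

end GammaRatio

def zetaCoef' (ℓ : ℕ) (x : ℝ) : ℝ := x * (gamCoef ℓ x - 1) / (2 * (1 - x))

lemma zetaCoef_eq_zetaCoef' (ℓ : ℕ) {q : ℝ} (hq : q ≠ 0) :
    zetaCoef ℓ q = zetaCoef' ℓ (2 / q) := by
  rw [zetaCoef, zetaCoef', show 2 * (1 - 2 / q) = 2 / q * (q - 2) by field_simp,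
    mul_div_mul_left _ _ (by positivity)]

section Recursion

variable {x : ℝ}

lemma zetaCoef'_succ (ℓ : ℕ) (hx0 : 0 < x) (hx2 : x < 2) (hx1 : x ≠ 1) :
    zetaCoef' (ℓ + 1) x = ((ℓ + 2 - x) * zetaCoef' ℓ x + x) / (ℓ + x) := by
  have h1x : 1 - x ≠ 0 := sub_ne_zero.2 hx1.symm
  have hxℓ : (ℓ : ℝ) + x ≠ 0 := by positivity
  rw [zetaCoef', zetaCoef', gamCoef_succ ℓ hx0 hx2, add_comm x]
  field_simp
  ring

lemma zetaCoef'_one (hx0 : 0 < x) (hx2 : x < 2) (hx1 : x ≠ 1) : zetaCoef' 1 x = 1 := by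
  have h1x : 1 - x ≠ 0 := sub_ne_zero.2 hx1.symm
  rw [zetaCoef', gamCoef_one hx0 hx2]
  field_simp
  ring

lemma zetaCoef'_two (hx0 : 0 < x) (hx2 : x < 2) (hx1 : x ≠ 1) : zetaCoef' 2 x = 3 / (1 + x) := by
  rw [zetaCoef'_succ 1 hx0 hx2 hx1, zetaCoef'_one hx0 hx2 hx1]
  norm_num

end Recursion

def zetaBound (α ℓ : ℝ) : ℝ := ℓ * (ℓ + 1 - 2 * α) / (2 * (1 - α))

section Bound

variable {α x : ℝ}

lemma zetaBound_one (hα : α ≠ 1) : zetaBound α 1 = 1 := by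
  have : 1 - α ≠ 0 := sub_ne_zero.2 hα.symm
  rw [zetaBound]
  field_simp
  ring

lemma zetaBound_two_sub (hα : α ≠ 1) (hx : 1 + x ≠ 0) :
    zetaBound α 2 - 3 / (1 + x) = ((3 - 2 * α) * x + α) / ((1 - α) * (1 + x)) := by
  have : 1 - α ≠ 0 := sub_ne_zero.2 hα.symm
  rw [zetaBound]
  field_simp
  ring

lemma zetaBound_succ_sub {ℓ : ℝ} (hα : α ≠ 1) (hℓx : ℓ + x ≠ 0) :
    zetaBound α (ℓ + 1) - ((ℓ + 2 - x) * zetaBound α ℓ + x) / (ℓ + x) =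
      ℓ * ((ℓ + 2 - 2 * α) * x + α) / ((1 - α) * (ℓ + x)) := by
  have : 1 - α ≠ 0 := sub_ne_zero.2 hα.symm
  rw [zetaBound, zetaBound]
  field_simp
  ring

lemma zetaCoef'_succ_lt_zetaBound {ℓ : ℕ} (hα : α < 1) (hx0 : 0 < x) (hx1 : x < 1)
    (hℓ : 0 < ℓ) (hpos : 0 < (ℓ + 2 - 2 * α) * x + α) (h : zetaCoef' ℓ x ≤ zetaBound α ℓ) :
    zetaCoef' (ℓ + 1) x < zetaBound α (ℓ + 1 : ℕ) := by
  have hℓ' : (0 : ℝ) < ℓ := by exact_mod_cast hℓ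
  have hℓx : (0 : ℝ) < ℓ + x := by positivity
  have hgap := zetaBound_succ_sub (ℓ := ℓ) hα.ne hℓx.ne'
  have hgap_pos : 0 < ℓ * ((ℓ + 2 - 2 * α) * x + α) / ((1 - α) * (ℓ + x)) := by
    have : 0 < 1 - α := by linarith
    positivity
  rw [zetaCoef'_succ ℓ hx0 (by linarith) hx1.ne, Nat.cast_succ]
  calc ((ℓ + 2 - x) * zetaCoef' ℓ x + x) / (ℓ + x)
      ≤ ((ℓ + 2 - x) * zetaBound α ℓ + x) / (ℓ + x) := by
        gcongr
        linarith
    _ < zetaBound α (ℓ + 1) := by linarith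

lemma zetaCoef'_two_le_zetaBound (hα : α < 1) (hx0 : 0 < x) (hx1 : x < 1)
    (hpos : 0 ≤ (3 - 2 * α) * x + α) : zetaCoef' 2 x ≤ zetaBound α 2 := by
  have : 0 < 1 - α := by linarith
  have hdiff := zetaBound_two_sub hα.ne (show 1 + x ≠ 0 by linarith)
  rw [zetaCoef'_two hx0 (by linarith) hx1.ne]
  have : 0 ≤ ((3 - 2 * α) * x + α) / ((1 - α) * (1 + x)) := by positivity
  linarith

lemma zetaCoef'_lt_zetaBound (hα : α < 1) (hx0 : 0 < x) (hx1 : x < 1)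
    (hpos : 0 ≤ (3 - 2 * α) * x + α) {ℓ : ℕ} (hℓ : 3 ≤ ℓ) : zetaCoef' ℓ x < zetaBound α ℓ := by
  have hpos' : ∀ ℓ : ℕ, 2 ≤ ℓ → 0 < (ℓ + 2 - 2 * α) * x + α := by
    intro ℓ hℓ
    have : (2 : ℝ) ≤ ℓ := by exact_mod_cast hℓ
    nlinarith
  induction ℓ, hℓ using Nat.le_induction with
  | base =>
    exact zetaCoef'_succ_lt_zetaBound hα hx0 hx1 two_pos (hpos' 2 le_rfl)
      (by exact_mod_cast zetaCoef'_two_le_zetaBound hα hx0 hx1 hpos)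
  | succ ℓ hℓ ih =>
    exact zetaCoef'_succ_lt_zetaBound hα hx0 hx1 (by omega) (hpos' ℓ (by omega)) ih.le

lemma zetaCoef'_two_eq_zetaBound_iff (hα : α < 1) (hx0 : 0 < x) (hx1 : x < 1) :
    zetaCoef' 2 x = zetaBound α 2 ↔ (3 - 2 * α) * x + α = 0 := by
  have : 0 < 1 - α := by linarith
  rw [zetaCoef'_two hx0 (by linarith) hx1.ne, eq_comm, ← sub_eq_zero,
    zetaBound_two_sub hα.ne (by linarith), div_eq_zero_iff]
  exact or_iff_left (by positivity)

end Bound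

section Threshold

variable {α q : ℝ}

lemma three_sub_two_mul_mul_two_div_add_eq (hα : α ≠ 0) (hq : q ≠ 0) :
    (3 - 2 * α) * (2 / q) + α = α * (q - (4 - 6 / α)) / q := by
  field_simp
  ring

lemma zero_le_three_sub_two_mul_mul_two_div_add_iff (hα : α < 0) (hq : 0 < q) :
    0 ≤ (3 - 2 * α) * (2 / q) + α ↔ q ≤ 4 - 6 / α := by
  rw [three_sub_two_mul_mul_two_div_add_eq hα.ne hq.ne', le_div_iff₀ hq, zero_mul,
    show α * (q - (4 - 6 / α)) = -α * (4 - 6 / α - q) by ring,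
    mul_nonneg_iff_of_pos_left (neg_pos.2 hα), sub_nonneg]

lemma three_sub_two_mul_mul_two_div_add_eq_zero_iff (hα : α < 3 / 2) (hq : 0 < q) :
    (3 - 2 * α) * (2 / q) + α = 0 ↔ α < 0 ∧ q = 4 - 6 / α := by
  rcases lt_or_ge α 0 with hα0 | hα0
  · rw [three_sub_two_mul_mul_two_div_add_eq hα0.ne hq.ne', div_eq_zero_iff, mul_eq_zero,
      sub_eq_zero]
    simp [hα0, hα0.ne, hq.ne']
  · have : 0 < 3 - 2 * α := by linarith
    simp only [not_lt.2 hα0, false_and, iff_false]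
    positivity

end Threshold

theorem statement16_general (α q : ℝ) (hα' : α < 1)
    (hq : (0 ≤ α ∧ 2 < q) ∨ (α < 0 ∧ 2 < q ∧ q ≤ 4 - 6 / α)) :
    (∀ ℓ : ℕ, 1 ≤ ℓ →
      zetaCoef ℓ q ≤ (ℓ : ℝ) * ((ℓ : ℝ) + 1 - 2 * α) / (2 * (1 - α))) ∧
    zetaCoef 1 q = 1 * (1 + 1 - 2 * α) / (2 * (1 - α)) ∧
    (∀ ℓ : ℕ, 3 ≤ ℓ →
      zetaCoef ℓ q < (ℓ : ℝ) * ((ℓ : ℝ) + 1 - 2 * α) / (2 * (1 - α))) ∧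
    (zetaCoef 2 q = 2 * (2 + 1 - 2 * α) / (2 * (1 - α)) ↔ (α < 0 ∧ q = 4 - 6 / α)) := by
  have hq2 : 2 < q := by rcases hq with ⟨-, h⟩ | ⟨-, h, -⟩ <;> exact h
  have hq0 : 0 < q := by linarith
  have hζ (ℓ : ℕ) : zetaCoef ℓ q = zetaCoef' ℓ (2 / q) := zetaCoef_eq_zetaCoef' ℓ hq0.ne'
  have hx0 : 0 < 2 / q := by positivity
  have hx1 : 2 / q < 1 := (div_lt_one hq0).2 hq2
  have hpos : 0 ≤ (3 - 2 * α) * (2 / q) + α := by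
    rcases hq with ⟨hα0, -⟩ | ⟨hα0, -, hq4⟩
    · have : 0 < 3 - 2 * α := by linarith
      positivity
    · exact (zero_le_three_sub_two_mul_mul_two_div_add_iff hα0 hq0).2 hq4
  have hζ1 : zetaCoef 1 q = zetaBound α 1 := by
    rw [hζ, zetaCoef'_one hx0 (by linarith) hx1.ne, zetaBound_one hα'.ne]
  refine ⟨fun ℓ hℓ => ?_, hζ1, fun ℓ hℓ => ?_, ?_⟩
  · show zetaCoef ℓ q ≤ zetaBound α ℓ
    obtain rfl | rfl | hℓ3 : ℓ = 1 ∨ ℓ = 2 ∨ 3 ≤ ℓ := by omega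
    · exact_mod_cast hζ1.le
    · rw [hζ]
      exact_mod_cast zetaCoef'_two_le_zetaBound hα' hx0 hx1 hpos
    · rw [hζ]
      exact (zetaCoef'_lt_zetaBound hα' hx0 hx1 hpos hℓ3).le
  · rw [hζ]
    exact zetaCoef'_lt_zetaBound hα' hx0 hx1 hpos hℓ
  · rw [hζ]
    exact (zetaCoef'_two_eq_zetaBound_iff hα' hx0 hx1).trans
      (three_sub_two_mul_mul_two_div_add_eq_zero_iff (by linarith) hq0)

/-- the inequality `ζ_ℓ(q) ≤ ℓ(ℓ+1-2α)/(2(1-α))` with its equality cases. -/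
theorem statement16 (α q : ℝ) (hα : -(1 / 2) < α) (hα' : α < 1)
    (hq : (0 ≤ α ∧ 2 < q) ∨ (α < 0 ∧ 2 < q ∧ q ≤ 4 - 6 / α)) :
    (∀ ℓ : ℕ, 1 ≤ ℓ →
      zetaCoef ℓ q ≤ (ℓ : ℝ) * ((ℓ : ℝ) + 1 - 2 * α) / (2 * (1 - α))) ∧
    zetaCoef 1 q = 1 * (1 + 1 - 2 * α) / (2 * (1 - α)) ∧
    (∀ ℓ : ℕ, 3 ≤ ℓ →
      zetaCoef ℓ q < (ℓ : ℝ) * ((ℓ : ℝ) + 1 - 2 * α) / (2 * (1 - α))) ∧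
    (zetaCoef 2 q = 2 * (2 + 1 - 2 * α) / (2 * (1 - α)) ↔ (α < 0 ∧ q = 4 - 6 / α)) :=
  statement16_general α q hα' hq
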